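/- In the field of fractions of 𝔽₂[a₁,a₂], consider the nine elements 1/(a₁³a₂³(a₁+a₂)⁶), 1/(a₁⁶a₂³(a₁+a₂)³), 1/(a₁³a₂⁶(a₁+a₂)³), 1/(a₁⁴a₂³(a₁+a₂)⁵), 1/(a₁³a₂⁴(a₁+a₂)⁵), 1/(a₁⁵a₂³(a₁+a₂)⁴), 1/(a₁⁵a₂⁴(a₁+a₂)³), 1/(a₁³a₂⁵(a₁+a₂)⁴), 1/(a₁⁴a₂⁵(a₁+a₂)³). This set is linearly dependent over 𝔽₂. -/
import Mathlib
set_option synthInstance.maxHeartbeats 1000000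
set_option maxHeartbeats 2000000


open MvPolynomial

noncomputable section

abbrev R2 : Type := MvPolynomial (Fin 2) (ZMod 2)
abbrev K2 : Type := FractionRing R2
def A1 : K2 := algebraMap R2 K2 (X 0)
def A2 : K2 := algebraMap R2 K2 (X 1)

/-- A set in the fraction field is linearly independent over 𝔽₂ iff no nonempty
finite subset sums to zero. -/
def LinIndepF2K (S : Set K2) : Prop :=
  ∀ T : Finset K2, ↑T ⊆ S → T.Nonempty → ∑ x ∈ T, x ≠ 0

lemma inj2 : Function.Injective (algebraMap R2 K2) := IsFractionRing.injective R2 K2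

lemma pnz (c : Fin 2 → ZMod 2) (p : R2) (hp : eval c p = 1) :
    algebraMap R2 K2 p ≠ 0 := by
  intro h
  have hz : p = 0 := (map_eq_zero_iff _ inj2).mp h
  rw [hz] at hp; simp at hp

lemma hA1 : A1 ≠ 0 := by unfold A1; exact pnz (fun i => if i = 0 then 1 else 0) _ (by simp)
lemma hA2 : A2 ≠ 0 := by unfold A2; exact pnz (fun _ => 1) _ (by simp)
lemma hS : A1 + A2 ≠ 0 := by
  have : A1 + A2 = algebraMap R2 K2 (X 0 + X 1) := by
    rw [map_add]; rfl
  rw [this]; exact pnz (fun i => if i = 0 then 1 else 0) _ (by simp)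
lemma hne : A1 ≠ A2 := by
  intro h
  have h' : (X 0 : R2) = X 1 := inj2 h
  have := congrArg (eval (fun i : Fin 2 => if i = 0 then 1 else 0)) h'
  simp at this
lemma hP : A1 ^ 2 + A1 * A2 + A2 ^ 2 ≠ 0 := by
  have : A1 ^ 2 + A1 * A2 + A2 ^ 2
      = algebraMap R2 K2 (X 0 ^ 2 + X 0 * X 1 + X 1 ^ 2) := by
    rw [map_add, map_add, map_pow, map_pow, map_mul]; rfl
  rw [this]; exact pnz (fun i => if i = 0 then 1 else 0) _ (by simp)
lemma h2 : (2 : K2) = 0 := by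
  have : CharP K2 2 := charP_of_injective_ringHom inj2 2
  exact this.cast_eq_zero ..

theorem stmt_19 :
    ¬ LinIndepF2K
      {(A1 ^ 3 * A2 ^ 3 * (A1 + A2) ^ 6)⁻¹, (A1 ^ 6 * A2 ^ 3 * (A1 + A2) ^ 3)⁻¹,
       (A1 ^ 3 * A2 ^ 6 * (A1 + A2) ^ 3)⁻¹, (A1 ^ 4 * A2 ^ 3 * (A1 + A2) ^ 5)⁻¹,
       (A1 ^ 3 * A2 ^ 4 * (A1 + A2) ^ 5)⁻¹, (A1 ^ 5 * A2 ^ 3 * (A1 + A2) ^ 4)⁻¹,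
       (A1 ^ 5 * A2 ^ 4 * (A1 + A2) ^ 3)⁻¹, (A1 ^ 3 * A2 ^ 5 * (A1 + A2) ^ 4)⁻¹,
       (A1 ^ 4 * A2 ^ 5 * (A1 + A2) ^ 3)⁻¹} := by
  intro h
  classical
  have hu := hA1
  have hv := hA2
  have hs := hS
  have huv := hne
  have hp := hP
  have hc2 := h2
  set u := A1
  set v := A2
  set e4 : K2 := (u ^ 4 * v ^ 3 * (u + v) ^ 5)⁻¹ with he4
  set e5 : K2 := (u ^ 3 * v ^ 4 * (u + v) ^ 5)⁻¹ with he5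
  set e8 : K2 := (u ^ 3 * v ^ 5 * (u + v) ^ 4)⁻¹ with he8
  set e9 : K2 := (u ^ 4 * v ^ 5 * (u + v) ^ 3)⁻¹ with he9
  have key : ∀ a b : K2, a ≠ 0 → a⁻¹ = b⁻¹ → a = b := by
    intro a b ha hab
    rw [← inv_inv a, hab, inv_inv]
  have cancel : ∀ c x y : K2, c ≠ 0 → c * x = c * y → x = y :=
    fun c x y hc hxy => mul_left_cancel₀ hc hxy
  have nz1 : u ^ 3 * v ^ 3 * (u + v) ^ 5 ≠ 0 :=
    mul_ne_zero (mul_ne_zero (pow_ne_zero _ hu) (pow_ne_zero _ hv)) (pow_ne_zero _ hs)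
  have nz2 : u ^ 3 * v ^ 3 * (u + v) ^ 4 ≠ 0 :=
    mul_ne_zero (mul_ne_zero (pow_ne_zero _ hu) (pow_ne_zero _ hv)) (pow_ne_zero _ hs)
  have nz3 : u ^ 4 * v ^ 3 * (u + v) ^ 3 ≠ 0 :=
    mul_ne_zero (mul_ne_zero (pow_ne_zero _ hu) (pow_ne_zero _ hv)) (pow_ne_zero _ hs)
  have nz4 : u ^ 3 * v ^ 4 * (u + v) ^ 3 ≠ 0 :=
    mul_ne_zero (mul_ne_zero (pow_ne_zero _ hu) (pow_ne_zero _ hv)) (pow_ne_zero _ hs)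
  have nz5 : u ^ 3 * v ^ 5 * (u + v) ^ 3 ≠ 0 :=
    mul_ne_zero (mul_ne_zero (pow_ne_zero _ hu) (pow_ne_zero _ hv)) (pow_ne_zero _ hs)
  have nz6 : u ^ 4 * v ^ 3 * (u + v) ^ 5 ≠ 0 :=
    mul_ne_zero (mul_ne_zero (pow_ne_zero _ hu) (pow_ne_zero _ hv)) (pow_ne_zero _ hs)
  have nz7 : u ^ 3 * v ^ 4 * (u + v) ^ 5 ≠ 0 :=
    mul_ne_zero (mul_ne_zero (pow_ne_zero _ hu) (pow_ne_zero _ hv)) (pow_ne_zero _ hs)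
  have nz8 : u ^ 3 * v ^ 4 * (u + v) ^ 4 ≠ 0 :=
    mul_ne_zero (mul_ne_zero (pow_ne_zero _ hu) (pow_ne_zero _ hv)) (pow_ne_zero _ hs)
  -- distinctness
  have d45 : e4 ≠ e5 := by
    intro he
    have heq := key _ _ nz6 he
    exact huv (cancel _ _ _ nz1 (by linear_combination heq))
  have d48 : e4 ≠ e8 := by
    intro he
    have heq := key _ _ nz6 he
    have h1 : u * (u + v) = v ^ 2 := cancel _ _ _ nz2 (by linear_combination heq)
    exact hp (by linear_combination h1 + v ^ 2 * hc2)
  have d49 : e4 ≠ e9 := by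
    intro he
    have heq := key _ _ nz6 he
    have h1 : (u + v) ^ 2 = v ^ 2 := cancel _ _ _ nz3 (by linear_combination heq)
    have h1' : u ^ 2 = 0 := by linear_combination h1 - u * v * hc2
    exact hu (pow_eq_zero_iff (by norm_num) |>.mp h1')
  have d58 : e5 ≠ e8 := by
    intro he
    have heq := key _ _ nz7 he
    have h1 : (u + v) = v := cancel _ _ _ nz8 (by linear_combination heq)
    exact hu (by linear_combination h1)
  have d59 : e5 ≠ e9 := by
    intro he
    have heq := key _ _ nz7 he
    have h1 : (u + v) ^ 2 = u * v := cancel _ _ _ nz4 (by linear_combination heq)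
    exact hp (by linear_combination h1)
  have d89 : e8 ≠ e9 := by
    intro he
    have heq := key _ _ (by
      exact mul_ne_zero (mul_ne_zero (pow_ne_zero _ hu) (pow_ne_zero _ hv)) (pow_ne_zero _ hs)) he
    have h1 : (u + v) = u := cancel _ _ _ nz5 (by linear_combination heq)
    exact hv (by linear_combination h1)
  have hT := h {e4, e5, e8, e9} ?_ ⟨e4, by simp⟩
  · apply hT
    rw [Finset.sum_insert (by simp [d45, d48, d49]),
        Finset.sum_insert (by simp [d58, d59]),
        Finset.sum_insert (by simp [d89]), Finset.sum_singleton]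
    set D : K2 := u ^ 4 * v ^ 5 * (u + v) ^ 5 with hD
    have hDnz : D ≠ 0 :=
      mul_ne_zero (mul_ne_zero (pow_ne_zero _ hu) (pow_ne_zero _ hv)) (pow_ne_zero _ hs)
    have nz9 : u ^ 3 * v ^ 5 * (u + v) ^ 4 ≠ 0 :=
      mul_ne_zero (mul_ne_zero (pow_ne_zero _ hu) (pow_ne_zero _ hv)) (pow_ne_zero _ hs)
    have nz10 : u ^ 4 * v ^ 5 * (u + v) ^ 3 ≠ 0 :=
      mul_ne_zero (mul_ne_zero (pow_ne_zero _ hu) (pow_ne_zero _ hv)) (pow_ne_zero _ hs)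
    have h4 : e4 * D = v ^ 2 := by
      rw [he4, hD, inv_mul_eq_div, div_eq_iff nz6]; ring
    have h5 : e5 * D = u * v := by
      rw [he5, hD, inv_mul_eq_div, div_eq_iff nz7]; ring
    have h8 : e8 * D = u * (u + v) := by
      rw [he8, hD, inv_mul_eq_div, div_eq_iff nz9]; ring
    have h9 : e9 * D = (u + v) ^ 2 := by
      rw [he9, hD, inv_mul_eq_div, div_eq_iff nz10]; ring
    have hsum : (e4 + e5 + e8 + e9) * D = 0 := by
      rw [add_mul, add_mul, add_mul, h4, h5, h8, h9]
      linear_combination (u ^ 2 + 2 * u * v + v ^ 2) * hc2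
    rcases mul_eq_zero.mp hsum with h0 | h0
    · linear_combination h0
    · exact absurd h0 hDnz
  · intro x hx
    simp only [Finset.coe_insert, Finset.coe_singleton, Set.mem_insert_iff,
      Set.mem_singleton_iff] at hx ⊢
    rcases hx with rfl | rfl | rfl | rfl <;> tauto
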